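/- Let f : ℝ → ℝ be a function that is bounded on [1, ∞) and rapidly decaying on [1, ∞), i.e. for every m ∈ ℕ, t^m f(t) → 0 as t → ∞. Then there exists a smooth function g : ℝ → ℝ such that g(t) > 0 for all t ≥ 1, g is monotone decreasing on [1, ∞), |f(t)| ≤ g(t) for all t ≥ 1, and for every m, j ∈ ℕ, t^m g^{(j)}(t) → 0 as t → ∞ (i.e. g and all its derivatives are rapidly decaying on [1, ∞)). -/

import Mathlib

open Filter

noncomputable section Stmt12Aux

/-- The complex exponential series with coefficients `c`. -/
def stmtH (c : ℕ → ℂ) : ℂ → ℂ := fun z => ∑' n, c n * Complex.exp (-z / ((n : ℂ) + 1))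

lemma stmt12_one_le_norm (n : ℕ) : (1 : ℝ) ≤ ‖((n : ℂ) + 1)‖ := by
  have h : ((n : ℂ) + 1) = (((n : ℝ) + 1 : ℝ) : ℂ) := by push_cast; ring
  rw [h, Complex.norm_real, Real.norm_eq_abs, abs_of_nonneg (by positivity)]
  have : (0:ℝ) ≤ (n:ℝ) := Nat.cast_nonneg n
  linarith

lemma stmt12_norm_w_le_one (n : ℕ) : ‖(-(((n : ℂ) + 1))⁻¹)‖ ≤ 1 := by
  rw [norm_neg, norm_inv]
  exact inv_le_one_of_one_le₀ (stmt12_one_le_norm n)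

lemma stmt12_norm_term_le (c : ℕ → ℂ) (n : ℕ) (z : ℂ) :
    ‖c n * Complex.exp (-z / ((n : ℂ) + 1))‖ ≤ ‖c n‖ * Real.exp ‖z‖ := by
  rw [norm_mul]
  have h1 : (-z / ((n : ℂ) + 1)).re ≤ ‖z‖ := by
    calc (-z / ((n : ℂ) + 1)).re ≤ |(-z / ((n : ℂ) + 1)).re| := le_abs_self _
    _ ≤ ‖(-z / ((n : ℂ) + 1))‖ := Complex.abs_re_le_norm _
    _ = ‖z‖ / ‖((n : ℂ) + 1)‖ := by
        rw [norm_div, norm_neg]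
    _ ≤ ‖z‖ := div_le_self (norm_nonneg _) (stmt12_one_le_norm n)
  apply mul_le_mul_of_nonneg_left _ (norm_nonneg _)
  rw [Complex.norm_exp]
  exact Real.exp_le_exp.2 h1

lemma stmt12_summable_cexp {ε : ℕ → ℝ} (hε : Summable ε) {c : ℕ → ℂ}
    (hc : ∀ n, ‖c n‖ ≤ ε n) (z : ℂ) :
    Summable fun n => c n * Complex.exp (-z / ((n : ℂ) + 1)) := by
  apply Summable.of_norm
  apply Summable.of_nonneg_of_le (fun n => norm_nonneg _)
    (fun n => (stmt12_norm_term_le c n z).trans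
      (mul_le_mul_of_nonneg_right (hc n) (Real.exp_nonneg _)))
  exact hε.mul_right _

lemma stmt12_term_hasDerivAt (c : ℕ → ℂ) (n : ℕ) (z : ℂ) :
    HasDerivAt (fun w => c n * Complex.exp (-w / ((n : ℂ) + 1)))
      (c n * (Complex.exp (-z / ((n : ℂ) + 1)) * (-1 / ((n : ℂ) + 1)))) z := by
  have h1 : HasDerivAt (fun w : ℂ => -w / ((n : ℂ) + 1)) (-1 / ((n : ℂ) + 1)) z := by
    simpa using ((hasDerivAt_id z).neg.div_const ((n : ℂ) + 1))
  exact (h1.cexp).const_mul _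

lemma stmt12_term_differentiable (c : ℕ → ℂ) (n : ℕ) :
    Differentiable ℂ (fun w => c n * Complex.exp (-w / ((n : ℂ) + 1))) :=
  fun z => (stmt12_term_hasDerivAt c n z).differentiableAt

lemma stmt12_H_hasDerivAt {ε : ℕ → ℝ} (hε : Summable ε) (c : ℕ → ℂ)
    (hc : ∀ n, ‖c n‖ ≤ ε n) (z : ℂ) :
    HasDerivAt (stmtH c) (stmtH (fun n => c n * (-(((n : ℂ) + 1))⁻¹)) z) z := by
  set R : ℝ := ‖z‖ + 1 with hR
  have hzU : z ∈ Metric.ball (0 : ℂ) R := by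
    simp only [Metric.mem_ball, dist_zero_right, hR]; linarith
  have hbound : ∀ (n : ℕ) (w : ℂ), w ∈ Metric.ball (0 : ℂ) R →
      ‖c n * Complex.exp (-w / ((n : ℂ) + 1))‖ ≤ ε n * Real.exp R := by
    intro n w hw
    refine (stmt12_norm_term_le c n w).trans ?_
    have hwR : ‖w‖ ≤ R := by
      simp only [Metric.mem_ball, dist_zero_right] at hw; linarith
    exact mul_le_mul (hc n) (Real.exp_le_exp.2 hwR) (Real.exp_nonneg _)
      ((norm_nonneg _).trans (hc n))
  have hu : Summable fun n => ε n * Real.exp R := hε.mul_right _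
  have hdiff : DifferentiableOn ℂ (stmtH c) (Metric.ball (0 : ℂ) R) :=
    Complex.differentiableOn_tsum_of_summable_norm hu
      (fun n => (stmt12_term_differentiable c n).differentiableOn)
      Metric.isOpen_ball hbound
  have hdAt : DifferentiableAt ℂ (stmtH c) z :=
    hdiff.differentiableAt (Metric.isOpen_ball.mem_nhds hzU)
  have hs : HasSum (fun n => deriv (fun w => c n * Complex.exp (-w / ((n : ℂ) + 1))) z)
      (deriv (stmtH c) z) :=
    Complex.hasSum_deriv_of_summable_norm hu
      (fun n => (stmt12_term_differentiable c n).differentiableOn)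
      Metric.isOpen_ball hbound hzU
  have h2 : (fun n => deriv (fun w => c n * Complex.exp (-w / ((n : ℂ) + 1))) z)
      = fun n => (c n * (-(((n : ℂ) + 1))⁻¹)) * Complex.exp (-z / ((n : ℂ) + 1)) := by
    funext n
    rw [(stmt12_term_hasDerivAt c n z).deriv]
    have hne : ((n : ℂ) + 1) ≠ 0 := by
      intro h
      have := stmt12_one_le_norm n
      rw [h, norm_zero] at this
      linarith
    field_simp
    try ring
  rw [h2] at hs
  have h3 : stmtH (fun n => c n * (-(((n : ℂ) + 1))⁻¹)) z = deriv (stmtH c) z := hs.tsum_eq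
  have h4 := hdAt.hasDerivAt
  rwa [← h3] at h4

/-- Tail supremum of `|f|`. -/
def stmtS (f : ℝ → ℝ) (n : ℕ) : ℝ := sSup ((fun s => |f s|) '' Set.Ici (max (n : ℝ) 1))

/-- Coefficients of the envelope series. -/
def stmtEps (f : ℝ → ℝ) (n : ℕ) : ℝ := Real.exp 1 * stmtS f n + Real.exp (-(n : ℝ))

/-- The envelope function. -/
def stmtG (f : ℝ → ℝ) (t : ℝ) : ℝ := ∑' n, stmtEps f n * Real.exp (-t / ((n : ℝ) + 1))

end Stmt12Aux

/-- Schwartz envelope for a bounded rapidly decaying function on `[1, ∞)`. -/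
theorem stmt12 (f : ℝ → ℝ)
    (hbd : ∃ C : ℝ, ∀ t : ℝ, 1 ≤ t → |f t| ≤ C)
    (hdecay : ∀ m : ℕ, Tendsto (fun t : ℝ => t ^ m * f t) atTop (nhds 0)) :
    ∃ g : ℝ → ℝ,
      ContDiff ℝ (⊤ : ℕ∞) g ∧
      (∀ t : ℝ, 1 ≤ t → 0 < g t) ∧
      AntitoneOn g (Set.Ici (1 : ℝ)) ∧
      (∀ t : ℝ, 1 ≤ t → |f t| ≤ g t) ∧
      (∀ m j : ℕ, Tendsto (fun t : ℝ => t ^ m * iteratedDeriv j g t) atTop (nhds 0)) := by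
  classical
  obtain ⟨C, hC⟩ := hbd
  have hC0 : 0 ≤ C := le_trans (abs_nonneg _) (hC 1 le_rfl)
  set S : ℕ → ℝ := stmtS f with hSdef
  set ε : ℕ → ℝ := stmtEps f with hεdef
  set g : ℝ → ℝ := stmtG f with hgdef
  have hεeq : ∀ n, ε n = Real.exp 1 * S n + Real.exp (-(n : ℝ)) := fun n => rfl
  have hgeq : ∀ t, g t = ∑' n, ε n * Real.exp (-t / ((n : ℝ) + 1)) := fun t => rfl
  -- basic facts about S
  have hSne : ∀ n : ℕ, ((fun s => |f s|) '' Set.Ici (max (n : ℝ) 1)).Nonempty :=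
    fun n => ⟨|f (max (n : ℝ) 1)|, Set.mem_image_of_mem _ Set.self_mem_Ici⟩
  have hSbdd : ∀ n : ℕ, BddAbove ((fun s => |f s|) '' Set.Ici (max (n : ℝ) 1)) := by
    intro n
    refine ⟨C, ?_⟩
    rintro y ⟨s, hs, rfl⟩
    exact hC s (le_trans (le_max_right _ _) hs)
  have hS0 : ∀ n, 0 ≤ S n := by
    intro n
    exact le_trans (abs_nonneg _) (le_csSup (hSbdd n)
      (Set.mem_image_of_mem _ Set.self_mem_Ici))
  -- tail bounds for f
  have htail : ∀ k : ℕ, ∃ A : ℝ, 0 ≤ A ∧ ∀ s : ℝ, 1 ≤ s → |f s| * s ^ k ≤ A := by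
    intro k
    have h1 : ∀ᶠ t : ℝ in atTop, |t ^ k * f t| ≤ 1 := by
      have h2 := (hdecay k).eventually (eventually_abs_sub_lt 0 one_pos)
      filter_upwards [h2] with t ht
      rw [sub_zero] at ht
      exact ht.le
    obtain ⟨T, hT⟩ := eventually_atTop.1 h1
    set T' : ℝ := max T 1 with hT'
    refine ⟨max 1 (C * T' ^ k), le_trans zero_le_one (le_max_left _ _), ?_⟩
    intro s hs
    rcases le_or_gt T' s with h | h
    · have h3 := hT s (le_trans (le_max_left _ _) h)
      rw [abs_mul, abs_of_nonneg (pow_nonneg (by linarith) k)] at h3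
      calc |f s| * s ^ k = s ^ k * |f s| := mul_comm _ _
      _ ≤ 1 := h3
      _ ≤ max 1 (C * T' ^ k) := le_max_left _ _
    · have hsk : s ^ k ≤ T' ^ k := pow_le_pow_left₀ (by linarith) h.le k
      calc |f s| * s ^ k ≤ C * T' ^ k :=
        mul_le_mul (hC s hs) hsk (pow_nonneg (by linarith) k) hC0
      _ ≤ max 1 (C * T' ^ k) := le_max_right _ _
  -- tail bound for S
  have hStail : ∀ k : ℕ, ∃ A : ℝ, 0 ≤ A ∧ ∀ n : ℕ, S n * (max (n : ℝ) 1) ^ k ≤ A := by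
    intro k
    obtain ⟨A, hA0, hA⟩ := htail k
    refine ⟨A, hA0, fun n => ?_⟩
    have hmpos : (0 : ℝ) < max (n : ℝ) 1 := lt_of_lt_of_le one_pos (le_max_right _ _)
    rw [← le_div_iff₀ (pow_pos hmpos k)]
    apply csSup_le (hSne n)
    rintro y ⟨s, hs, rfl⟩
    have hs1 : (1 : ℝ) ≤ s := le_trans (le_max_right _ _) hs
    have hsp : (0 : ℝ) < s ^ k := pow_pos (by linarith) k
    calc |f s| ≤ A / s ^ k := (le_div_iff₀ hsp).2 (hA s hs1)
    _ ≤ A / (max (n : ℝ) 1) ^ k :=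
        div_le_div_of_nonneg_left hA0 (pow_pos hmpos k) (pow_le_pow_left₀ hmpos.le hs k)
  -- polynomial bounds for ε
  have hεpoly : ∀ k : ℕ, ∃ B : ℝ, 0 ≤ B ∧ ∀ n : ℕ, ε n * ((n : ℝ) + 1) ^ k ≤ B := by
    intro k
    obtain ⟨A, hA0, hA⟩ := hStail k
    refine ⟨Real.exp 1 * (A * 2 ^ k) + (Nat.factorial k : ℝ) * Real.exp 1,
      by positivity, fun n => ?_⟩
    have hmpos : (0 : ℝ) < max (n : ℝ) 1 := lt_of_lt_of_le one_pos (le_max_right _ _)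
    have hn2 : ((n : ℝ) + 1) ≤ 2 * max (n : ℝ) 1 := by
      rcases Nat.eq_zero_or_pos n with h | h
      · subst h; norm_num
      · have h1 : (1 : ℝ) ≤ (n : ℝ) := by exact_mod_cast h
        rw [max_eq_left h1]; linarith
    have hpow : ((n : ℝ) + 1) ^ k ≤ 2 ^ k * (max (n : ℝ) 1) ^ k := by
      rw [← mul_pow]
      exact pow_le_pow_left₀ (by positivity) hn2 k
    have hfirst : S n * ((n : ℝ) + 1) ^ k ≤ A * 2 ^ k := by
      calc S n * ((n : ℝ) + 1) ^ k ≤ S n * (2 ^ k * (max (n : ℝ) 1) ^ k) :=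
            mul_le_mul_of_nonneg_left hpow (hS0 n)
      _ = S n * (max (n : ℝ) 1) ^ k * 2 ^ k := by ring
      _ ≤ A * 2 ^ k := mul_le_mul_of_nonneg_right (hA n) (by positivity)
    have hsecond : Real.exp (-(n : ℝ)) * ((n : ℝ) + 1) ^ k
        ≤ (Nat.factorial k : ℝ) * Real.exp 1 := by
      have h1 : ((n : ℝ) + 1) ^ k ≤ (Nat.factorial k : ℝ) * Real.exp ((n : ℝ) + 1) := by
        have h2 := Real.pow_div_factorial_le_exp (x := (n : ℝ) + 1) (by positivity) k
        rw [div_le_iff₀ (by positivity)] at h2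
        calc ((n : ℝ) + 1) ^ k ≤ Real.exp ((n : ℝ) + 1) * (Nat.factorial k : ℝ) := h2
        _ = (Nat.factorial k : ℝ) * Real.exp ((n : ℝ) + 1) := mul_comm _ _
      calc Real.exp (-(n : ℝ)) * ((n : ℝ) + 1) ^ k
          ≤ Real.exp (-(n : ℝ)) * ((Nat.factorial k : ℝ) * Real.exp ((n : ℝ) + 1)) :=
            mul_le_mul_of_nonneg_left h1 (Real.exp_nonneg _)
      _ = (Nat.factorial k : ℝ) * (Real.exp (-(n : ℝ)) * Real.exp ((n : ℝ) + 1)) := by ring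
      _ = (Nat.factorial k : ℝ) * Real.exp 1 := by
            rw [← Real.exp_add]
            ring_nf
    calc ε n * ((n : ℝ) + 1) ^ k
        = Real.exp 1 * (S n * ((n : ℝ) + 1) ^ k)
          + Real.exp (-(n : ℝ)) * ((n : ℝ) + 1) ^ k := by rw [hεeq n]; ring
    _ ≤ Real.exp 1 * (A * 2 ^ k) + (Nat.factorial k : ℝ) * Real.exp 1 := by
          exact add_le_add (mul_le_mul_of_nonneg_left hfirst (Real.exp_nonneg _)) hsecond
  have hεpos : ∀ n, 0 < ε n := by
    intro n
    have h1 : 0 ≤ Real.exp 1 * S n := mul_nonneg (Real.exp_nonneg _) (hS0 n)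
    have h2 : 0 < Real.exp (-(n : ℝ)) := Real.exp_pos _
    rw [hεeq n]; linarith
  -- summability of 1/(n+1)^2
  have hK : Summable (fun n : ℕ => 1 / ((n : ℝ) + 1) ^ 2) := by
    have h1 : Summable (fun n : ℕ => (((n : ℝ)) ^ 2)⁻¹) :=
      Real.summable_nat_pow_inv.2 (by norm_num)
    have h2 := (summable_nat_add_iff 1).2 h1
    apply h2.congr
    intro n
    push_cast
    rw [one_div]
  -- summability of ε
  have hεsum : Summable ε := by
    obtain ⟨B, hB0, hB⟩ := hεpoly 2
    apply Summable.of_nonneg_of_le (fun n => (hεpos n).le)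
      (f := fun n : ℕ => B * (1 / ((n : ℝ) + 1) ^ 2)) ?_ (hK.mul_left B)
    intro n
    show ε n ≤ B * (1 / ((n : ℝ) + 1) ^ 2)
    rw [mul_one_div, le_div_iff₀ (by positivity)]
    exact hB n
  -- summability of series for g at every t
  have hgsum : ∀ t : ℝ, Summable (fun n => ε n * Real.exp (-t / ((n : ℝ) + 1))) := by
    intro t
    apply Summable.of_nonneg_of_le
      (fun n => mul_nonneg (hεpos n).le (Real.exp_nonneg _))
      (f := fun n => ε n * Real.exp |t|) ?_ (hεsum.mul_right _)
    intro n
    apply mul_le_mul_of_nonneg_left _ (hεpos n).le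
    apply Real.exp_le_exp.2
    calc -t / ((n : ℝ) + 1) ≤ |(-t) / ((n : ℝ) + 1)| := le_abs_self _
    _ = |t| / ((n : ℝ) + 1) := by
        rw [abs_div, abs_neg, abs_of_nonneg (by positivity : (0:ℝ) ≤ (n : ℝ) + 1)]
    _ ≤ |t| := div_le_self (abs_nonneg _) (by simp)
  -- complex coefficients
  set c : ℕ → ℂ := fun n => ((ε n : ℝ) : ℂ) with hcdef
  have hc : ∀ n, ‖c n‖ ≤ ε n := by
    intro n
    rw [hcdef]
    simp only [Complex.norm_real, Real.norm_eq_abs]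
    exact le_of_eq (abs_of_nonneg (hεpos n).le)
  have hcj : ∀ j : ℕ, ∀ n, ‖c n * (-(((n : ℂ) + 1))⁻¹) ^ j‖ ≤ ε n := by
    intro j n
    rw [norm_mul, norm_pow]
    calc ‖c n‖ * ‖(-(((n : ℂ) + 1))⁻¹)‖ ^ j ≤ ε n * 1 ^ j := by
          apply mul_le_mul (hc n) (pow_le_pow_left₀ (norm_nonneg _)
            (stmt12_norm_w_le_one n) j) (by positivity) ((norm_nonneg _).trans (hc n))
    _ = ε n := by rw [one_pow, mul_one]
  -- expressing complex terms over real points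
  have hterm : ∀ (b : ℕ → ℂ) (n : ℕ) (t : ℝ),
      b n * Complex.exp (-(t : ℂ) / ((n : ℂ) + 1))
      = b n * ((Real.exp (-t / ((n : ℝ) + 1)) : ℝ) : ℂ) := by
    intro b n t
    congr 1
    rw [Complex.ofReal_exp]
    congr 1
    push_cast
    ring
  have hre : ∀ t : ℝ, (stmtH c (t : ℂ)).re = g t := by
    intro t
    rw [hgeq t]
    unfold stmtH
    have hsum : Summable (fun n => c n * Complex.exp (-(t : ℂ) / ((n : ℂ) + 1))) :=
      stmt12_summable_cexp hεsum hc _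
    rw [Complex.re_tsum hsum]
    apply tsum_congr
    intro n
    rw [hterm c n t, hcdef]
    rw [← Complex.ofReal_mul, Complex.ofReal_re]
  -- smoothness
  have hHcd : ContDiff ℂ ⊤ (stmtH c) := by
    apply contDiff_omega_iff_analyticOnNhd.2
    have hdiff : Differentiable ℂ (stmtH c) :=
      fun z => (stmt12_H_hasDerivAt hεsum c hc z).differentiableAt
    exact hdiff.differentiableOn.analyticOnNhd isOpen_univ
  have hgcd : ContDiff ℝ (⊤ : ℕ∞) g := by
    have h1 := hHcd.real_of_complex
    have heq : (fun x : ℝ => (stmtH c x).re) = g := funext hre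
    rw [heq] at h1
    exact h1.of_le le_top
  -- iterated derivatives of g
  have hiter : ∀ j : ℕ, iteratedDeriv j g
      = fun t : ℝ => (stmtH (fun n => c n * (-(((n : ℂ) + 1))⁻¹) ^ j) (t : ℂ)).re := by
    intro j
    induction j with
    | zero =>
      rw [iteratedDeriv_zero]
      funext t
      rw [← hre t]
      unfold stmtH
      congr 1
      exact tsum_congr fun n => by simp
    | succ j ih =>
      rw [iteratedDeriv_succ, ih]
      funext t
      have hdc : HasDerivAt (stmtH (fun n => c n * (-(((n : ℂ) + 1))⁻¹) ^ j))
          (stmtH (fun n => (c n * (-(((n : ℂ) + 1))⁻¹) ^ j) * (-(((n : ℂ) + 1))⁻¹)) (t : ℂ))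
          (t : ℂ) := stmt12_H_hasDerivAt hεsum _ (hcj j) _
      have hre2 : HasDerivAt
          (fun s : ℝ => (stmtH (fun n => c n * (-(((n : ℂ) + 1))⁻¹) ^ j) (s : ℂ)).re)
          ((stmtH (fun n => (c n * (-(((n : ℂ) + 1))⁻¹) ^ j) * (-(((n : ℂ) + 1))⁻¹))
            (t : ℂ)).re) t := hdc.real_of_complex
      rw [hre2.deriv]
      congr 1
      unfold stmtH
      exact tsum_congr fun n => by simp only [pow_succ]; ring
  -- bound on iterated derivatives
  have hboundj : ∀ (j : ℕ) (t : ℝ), |iteratedDeriv j g t| ≤ g t := by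
    intro j t
    rw [hiter j]
    have hsumj : Summable (fun n => (c n * (-(((n : ℂ) + 1))⁻¹) ^ j)
        * Complex.exp (-(t : ℂ) / ((n : ℂ) + 1))) :=
      stmt12_summable_cexp hεsum (hcj j) _
    calc |(stmtH (fun n => c n * (-(((n : ℂ) + 1))⁻¹) ^ j) (t : ℂ)).re|
        ≤ ‖stmtH (fun n => c n * (-(((n : ℂ) + 1))⁻¹) ^ j) (t : ℂ)‖ :=
          Complex.abs_re_le_norm _
    _ = ‖stmtH (fun n => c n * (-(((n : ℂ) + 1))⁻¹) ^ j) (t : ℂ)‖ := by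
          rfl
    _ ≤ ∑' n, ‖(c n * (-(((n : ℂ) + 1))⁻¹) ^ j) * Complex.exp (-(t : ℂ) / ((n : ℂ) + 1))‖ :=
          norm_tsum_le_tsum_norm hsumj.norm
    _ ≤ ∑' n, ε n * Real.exp (-t / ((n : ℝ) + 1)) := by
          apply Summable.tsum_le_tsum _ hsumj.norm (hgsum t)
          intro n
          rw [hterm (fun k => c k * (-(((k : ℂ) + 1))⁻¹) ^ j) n t,
            norm_mul, Complex.norm_real, Real.norm_eq_abs,
            abs_of_nonneg (Real.exp_nonneg _)]
          exact mul_le_mul_of_nonneg_right (hcj j n) (Real.exp_nonneg _)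
    _ = g t := (hgeq t).symm
  -- g is positive
  have hgpos : ∀ t : ℝ, 0 < g t := by
    intro t
    have h1 := Summable.le_tsum (hgsum t) 0 fun m _ =>
      mul_nonneg (hεpos m).le (Real.exp_nonneg _)
    have h2 : 0 < ε 0 * Real.exp (-t / (((0 : ℕ) : ℝ) + 1)) :=
      mul_pos (hεpos 0) (Real.exp_pos _)
    rw [hgeq t]
    exact lt_of_lt_of_le h2 h1
  -- g is antitone
  have hganti : Antitone g := by
    intro x y hxy
    rw [hgeq x, hgeq y]
    apply Summable.tsum_le_tsum _ (hgsum y) (hgsum x)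
    intro n
    apply mul_le_mul_of_nonneg_left _ (hεpos n).le
    apply Real.exp_le_exp.2
    rw [neg_div, neg_div, neg_le_neg_iff]
    gcongr
  -- domination
  have hdom : ∀ t : ℝ, 1 ≤ t → |f t| ≤ g t := by
    intro t ht
    set n : ℕ := ⌊t⌋₊ with hn
    have hn1 : 1 ≤ n := Nat.le_floor (by exact_mod_cast ht)
    have hn1' : (1 : ℝ) ≤ (n : ℝ) := by exact_mod_cast hn1
    have hnt : (n : ℝ) ≤ t := Nat.floor_le (by linarith)
    have htn1 : t ≤ (n : ℝ) + 1 := (Nat.lt_floor_add_one t).le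
    have hmax : max (n : ℝ) 1 = (n : ℝ) := max_eq_left hn1'
    have hfS : |f t| ≤ S n := by
      apply le_csSup (hSbdd n)
      refine ⟨t, ?_, rfl⟩
      rw [Set.mem_Ici, hmax]
      exact hnt
    have hexp : Real.exp (-1) ≤ Real.exp (-t / ((n : ℝ) + 1)) := by
      apply Real.exp_le_exp.2
      rw [neg_div, neg_le_neg_iff]
      rw [div_le_one (by positivity)]
      exact htn1
    have hterm2 : S n ≤ ε n * Real.exp (-t / ((n : ℝ) + 1)) := by
      have h1 : S n = (Real.exp 1 * S n) * Real.exp (-1) := by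
        rw [mul_comm (Real.exp 1) (S n), mul_assoc, ← Real.exp_add]
        norm_num
      rw [h1]
      apply mul_le_mul _ hexp (Real.exp_nonneg _) (hεpos n).le
      rw [hεeq n]
      have := Real.exp_pos (-(n : ℝ))
      linarith
    calc |f t| ≤ S n := hfS
    _ ≤ ε n * Real.exp (-t / ((n : ℝ) + 1)) := hterm2
    _ ≤ g t := by
        rw [hgeq t]
        exact Summable.le_tsum (hgsum t) n fun m _ =>
          mul_nonneg (hεpos m).le (Real.exp_nonneg _)
  -- sqrt tends to infinity
  have hsqrt : Tendsto Real.sqrt atTop atTop := by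
    apply tendsto_atTop.2
    intro b
    rw [eventually_atTop]
    refine ⟨(max b 0) ^ 2, fun t ht => ?_⟩
    calc b ≤ max b 0 := le_max_left _ _
    _ = Real.sqrt ((max b 0) ^ 2) := (Real.sqrt_sq (le_max_right _ _)).symm
    _ ≤ Real.sqrt t := Real.sqrt_le_sqrt ht
  -- decay of g
  have hgdecay : ∀ m : ℕ, Tendsto (fun t : ℝ => t ^ m * g t) atTop (nhds 0) := by
    intro m
    obtain ⟨B, hB0, hB⟩ := hεpoly (2 * m + 4)
    set E : ℝ := ∑' n, ε n with hE
    set K : ℝ := ∑' n : ℕ, 1 / ((n : ℝ) + 1) ^ 2 with hKd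
    have hE0 : 0 ≤ E := tsum_nonneg fun n => (hεpos n).le
    have hK0 : 0 ≤ K := tsum_nonneg fun n => by positivity
    have hgle : ∀ t : ℝ, 1 ≤ t → g t ≤ E * Real.exp (-Real.sqrt t) + B / t ^ (m + 1) * K := by
      intro t ht
      have ht0 : (0 : ℝ) < t := by linarith
      have hst : 0 < Real.sqrt t := Real.sqrt_pos.2 ht0
      have htermle : ∀ n : ℕ, ε n * Real.exp (-t / ((n : ℝ) + 1))
          ≤ ε n * Real.exp (-Real.sqrt t) + B / t ^ (m + 1) * (1 / ((n : ℝ) + 1) ^ 2) := by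
        intro n
        have hnp : (0 : ℝ) < (n : ℝ) + 1 := by positivity
        rcases le_or_gt ((n : ℝ) + 1) (Real.sqrt t) with h | h
        · have h1 : Real.sqrt t ≤ t / ((n : ℝ) + 1) := by
            have h2 := div_le_div_of_nonneg_left ht0.le hnp h
            rwa [Real.div_sqrt] at h2
          have h2 : Real.exp (-t / ((n : ℝ) + 1)) ≤ Real.exp (-Real.sqrt t) := by
            apply Real.exp_le_exp.2
            rw [neg_div]
            linarith
          have h3 : ε n * Real.exp (-t / ((n : ℝ) + 1)) ≤ ε n * Real.exp (-Real.sqrt t) :=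
            mul_le_mul_of_nonneg_left h2 (hεpos n).le
          have h4 : 0 ≤ B / t ^ (m + 1) * (1 / ((n : ℝ) + 1) ^ 2) := by positivity
          linarith
        · have h1 : t ≤ ((n : ℝ) + 1) ^ 2 := by
            have h2 : Real.sqrt t * Real.sqrt t ≤ ((n : ℝ) + 1) * ((n : ℝ) + 1) :=
              mul_le_mul h.le h.le hst.le hnp.le
            rw [Real.mul_self_sqrt ht0.le] at h2
            calc t ≤ ((n : ℝ) + 1) * ((n : ℝ) + 1) := h2
            _ = ((n : ℝ) + 1) ^ 2 := (sq _).symm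
          have h2 : t ^ (m + 1) ≤ ((n : ℝ) + 1) ^ (2 * m + 2) := by
            calc t ^ (m + 1) ≤ (((n : ℝ) + 1) ^ 2) ^ (m + 1) :=
              pow_le_pow_left₀ ht0.le h1 (m + 1)
            _ = ((n : ℝ) + 1) ^ (2 * m + 2) := by rw [← pow_mul]; ring_nf
          have h3 : ε n * (t ^ (m + 1) * ((n : ℝ) + 1) ^ 2) ≤ B := by
            calc ε n * (t ^ (m + 1) * ((n : ℝ) + 1) ^ 2)
                ≤ ε n * (((n : ℝ) + 1) ^ (2 * m + 2) * ((n : ℝ) + 1) ^ 2) :=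
                  mul_le_mul_of_nonneg_left
                    (mul_le_mul_of_nonneg_right h2 (by positivity)) (hεpos n).le
            _ = ε n * ((n : ℝ) + 1) ^ (2 * m + 4) := by rw [← pow_add]
            _ ≤ B := hB n
          have h4 : ε n ≤ B / t ^ (m + 1) * (1 / ((n : ℝ) + 1) ^ 2) := by
            rw [div_mul_div_comm, mul_one, le_div_iff₀ (by positivity)]
            exact h3
          have h5 : ε n * Real.exp (-t / ((n : ℝ) + 1)) ≤ ε n := by
            have h6 : Real.exp (-t / ((n : ℝ) + 1)) ≤ 1 := by
              apply Real.exp_le_one_iff.2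
              rw [neg_div]
              have : 0 ≤ t / ((n : ℝ) + 1) := by positivity
              linarith
            calc ε n * Real.exp (-t / ((n : ℝ) + 1)) ≤ ε n * 1 :=
              mul_le_mul_of_nonneg_left h6 (hεpos n).le
            _ = ε n := mul_one _
          have h7 : 0 ≤ ε n * Real.exp (-Real.sqrt t) :=
            mul_nonneg (hεpos n).le (Real.exp_nonneg _)
          linarith
      calc g t = ∑' n, ε n * Real.exp (-t / ((n : ℝ) + 1)) := hgeq t
      _ ≤ ∑' n, (ε n * Real.exp (-Real.sqrt t)
            + B / t ^ (m + 1) * (1 / ((n : ℝ) + 1) ^ 2)) :=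
          Summable.tsum_le_tsum htermle (hgsum t)
            ((hεsum.mul_right _).add (hK.mul_left _))
      _ = E * Real.exp (-Real.sqrt t) + B / t ^ (m + 1) * K := by
          rw [Summable.tsum_add (hεsum.mul_right _) (hK.mul_left _), tsum_mul_right, tsum_mul_left]
    have h1 : Tendsto (fun t : ℝ => t ^ m * Real.exp (-Real.sqrt t)) atTop (nhds 0) := by
      have h2 := (Real.tendsto_pow_mul_exp_neg_atTop_nhds_zero (2 * m)).comp hsqrt
      apply Filter.Tendsto.congr' _ h2
      filter_upwards [eventually_ge_atTop (0 : ℝ)] with t ht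
      simp only [Function.comp_apply]
      rw [pow_mul, Real.sq_sqrt ht]
    have h2 : Tendsto (fun t : ℝ => B * K / t) atTop (nhds 0) :=
      tendsto_const_nhds.div_atTop tendsto_id
    have h3 : Tendsto (fun t : ℝ => E * (t ^ m * Real.exp (-Real.sqrt t)) + B * K / t)
        atTop (nhds 0) := by
      have := (h1.const_mul E).add h2
      simpa using this
    apply squeeze_zero' ?_ ?_ h3
    · filter_upwards [eventually_ge_atTop (1 : ℝ)] with t ht
      exact mul_nonneg (pow_nonneg (by linarith) m) (hgpos t).le
    · filter_upwards [eventually_ge_atTop (1 : ℝ)] with t ht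
      have ht0 : (0 : ℝ) < t := by linarith
      have hb := hgle t ht
      have h4 : t ^ m * g t ≤ t ^ m * (E * Real.exp (-Real.sqrt t) + B / t ^ (m + 1) * K) :=
        mul_le_mul_of_nonneg_left hb (pow_nonneg ht0.le m)
      have h5 : t ^ m * (E * Real.exp (-Real.sqrt t) + B / t ^ (m + 1) * K)
          = E * (t ^ m * Real.exp (-Real.sqrt t)) + B * K / t := by
        have htne : t ≠ 0 := ht0.ne'
        field_simp [pow_succ]
        ring
      exact h4.trans_eq h5
  -- conclusion
  refine ⟨g, hgcd, fun t _ => hgpos t, hganti.antitoneOn _, hdom, ?_⟩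
  intro m j
  apply squeeze_zero_norm' ?_ (hgdecay m)
  filter_upwards [eventually_ge_atTop (1 : ℝ)] with t ht
  have ht0 : (0 : ℝ) ≤ t := by linarith
  rw [Real.norm_eq_abs, abs_mul, abs_of_nonneg (pow_nonneg ht0 m)]
  exact mul_le_mul_of_nonneg_left (hboundj j t) (pow_nonneg ht0 m)
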